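/- arXiv:1512.08009 — 3 statements merged into one kernel-verified Lean document; each statement's English description precedes it below -/
import Mathlib

section
/- Let M be a monoid containing an element m₀ with m₀ ≠ 1. Then the writer monad T X = X × M on sets does not admit dependent Kleisli extensions: there is no operation ext which, for every type A and every type family B : A × M → Type, sends each dependent function f : ∀ a : A, B (a, 1) × M to a function ext f : ∀ p : A × M, B p × M. -/
theorem nonempty_of_writer_dependent_kleisli {M : Type} [One M]
    (ext : ∀ (A : Type) (B : A × M → Type), (∀ a : A, B (a, 1) × M) → (∀ p : A × M, B p × M))
    {A : Type} (B : A × M → Type) (hB : ∀ a : A, Nonempty (B (a, 1))) (p : A × M) :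
    Nonempty (B p) :=
  ⟨(ext A B (fun a => ((hB a).some, 1)) p).1⟩

/-- The writer monad `T X = X × M` on sets does not admit dependent Kleisli
extensions when the monoid `M` is non-trivial. -/
theorem writer_no_dependent_kleisli {M : Type} [Monoid M] (m₀ : M) (hm : m₀ ≠ 1) :
    IsEmpty (∀ (A : Type) (B : A × M → Type),
      (∀ a : A, B (a, 1) × M) → (∀ p : A × M, B p × M)) := by
  refine ⟨fun ext => hm ?_⟩
  -- The family of proofs of `p.2 = 1` is inhabited over the unit and empty over `m₀`.
  obtain ⟨⟨h⟩⟩ := nonempty_of_writer_dependent_kleisli ext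
    (fun p : Unit × M => PLift (p.2 = 1)) (fun _ => ⟨⟨rfl⟩⟩) ((), m₀)
  exact h
end

section
/- Let S be a type with two distinct elements s₀ ≠ s₁. Then the reader monad T X = (S → X) on sets does not admit dependent Kleisli extensions: there is no operation ext which, for every type A and every type family B : (S → A) → Type, sends each dependent function f : ∀ a : A, ∀ s : S, B (fun _ => a) to a function ext f : ∀ t : S → A, ∀ s : S, B t. -/
def ReaderDependentKleisli (S : Type) : Type 1 :=
  ∀ (A : Type) (B : (S → A) → Type),
    (∀ a : A, ∀ _ : S, B (fun _ => a)) → (∀ t : S → A, ∀ _ : S, B t)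

theorem ReaderDependentKleisli.of_forall_const {S A : Type} (ext : ReaderDependentKleisli S)
    (s : S) {P : (S → A) → Prop} (hP : ∀ a : A, P (fun _ => a)) (t : S → A) : P t :=
  (ext A (fun t => PLift (P t)) (fun a _ => ⟨hP a⟩) t s).down

/-- The reader monad `T X = S → X` on sets does not admit dependent Kleisli
extensions when `S` has two distinct elements. -/
theorem reader_no_dependent_kleisli {S : Type} (s₀ s₁ : S) (hs : s₀ ≠ s₁) :
    IsEmpty (∀ (A : Type) (B : (S → A) → Type),
      (∀ a : A, ∀ _ : S, B (fun _ => a)) → (∀ t : S → A, ∀ _ : S, B t)) :=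
  ⟨fun ext => hs <| ReaderDependentKleisli.of_forall_const ext s₀
    (P := fun t : S → S => t s₀ = t s₁) (fun _ => rfl) id⟩
end

section
/- Let S be a type with two distinct elements s₀ ≠ s₁. Then the global state monad T X = (S → X × S) on sets does not admit dependent Kleisli extensions: there is no operation ext which, for every type A and every type family B : (S → A × S) → Type, sends each dependent function f : ∀ a : A, ∀ s : S, B (fun s' => (a, s')) × S to a function ext f : ∀ t : S → A × S, ∀ s : S, B t × S. -/
/-!
Extending the family `B t := "t is of the form η a"`, which is inhabited at every `η a`, would
make every computation pure. The constant computation `fun _ => (a, s₀)` is not: it forgets the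
input state, whereas `η a` returns it.
-/

theorem exists_eq_pure_of_dependentExt {S A : Type}
    (ext : ∀ B : (S → A × S) → Type,
      (∀ a : A, ∀ _ : S, B (fun s' => (a, s')) × S) → (∀ t : S → A × S, ∀ _ : S, B t × S))
    (t : S → A × S) (s : S) : ∃ a, t = fun s' => (a, s') :=
  (ext (fun t => PLift (∃ a, t = fun s' => (a, s'))) (fun a s => (⟨a, rfl⟩, s)) t s).1.down

/-- The global state monad `T X = S → X × S` on sets does not admit dependent
Kleisli extensions when `S` has two distinct elements. -/
theorem state_no_dependent_kleisli {S : Type} (s₀ s₁ : S) (hs : s₀ ≠ s₁) :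
    IsEmpty (∀ (A : Type) (B : (S → A × S) → Type),
      (∀ a : A, ∀ _ : S, B (fun s' => (a, s')) × S) →
      (∀ t : S → A × S, ∀ _ : S, B t × S)) := by
  refine ⟨fun ext => ?_⟩
  obtain ⟨_, h⟩ := exists_eq_pure_of_dependentExt (ext Unit) (fun _ => ((), s₀)) s₀
  exact hs (congrArg (fun t => (t s₁).2) h)
end
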